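/- arXiv:math/0608167 — 2 statements merged into one kernel-verified Lean document; each statement's English description precedes it below -/
import Mathlib

section
/- Let n ≥ 1 be a natural number and m₁,…,mₙ ∈ ℕ. For each k with 2 ≤ k ≤ n let φ_k(t, x₁, …, x_{k−1}) = c_{k,0}·t + c_{k,1}·x₁ + ⋯ + c_{k,k−1}·x_{k−1} be a homogeneous linear function with nonnegative real coefficients c_{k,l} ≥ 0. For t ∈ ℕ set Ω_t = { a ∈ ℕⁿ : a₁ ≤ t, and a_k ≤ φ_k(t, a₁, …, a_{k−1}) for all 2 ≤ k ≤ n }, and set R₁ = { x ∈ ℝⁿ : 0 ≤ x₁ ≤ 1, and 0 ≤ x_k ≤ φ_k(1, x₁, …, x_{k−1}) for all 2 ≤ k ≤ n }. Then, as t → ∞ through the natural numbers, t^{−(m₁+⋯+mₙ+n)} · Σ_{a ∈ Ω_t} a₁^{m₁} ⋯ aₙ^{mₙ} converges to the Lebesgue integral ∫_{R₁} x₁^{m₁} ⋯ xₙ^{mₙ} dx; equivalently, the lattice sum equals the iterated integral ∫₀^t ∫₀^{φ₂(t,x₁)} ⋯ ∫₀^{φₙ(t,x₁,…,x_{n−1})}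 x₁^{m₁}⋯xₙ^{mₙ} dxₙ⋯dx₁ up to terms of lower order in t. -/
open Filter Topology MeasureTheory Finset

/-!
Each `φ_k` is homogeneous, so `a ∈ Ω_t` exactly when `a / t ∈ R₁`, and the monomial `f` is
homogeneous of degree `∑ m_j`. Hence the normalised lattice sum is the Riemann sum `t⁻ⁿ ∑ f (a / t)`
of `f` over the grid points `t⁻¹ ℕⁿ ∩ R₁`. The region `R₁` is closed, convex and bounded (its
coordinates are nonnegative, so each is bounded in terms of the earlier ones), and the frontier of a
convex set is null; so these Riemann sums converge to `∫_{R₁} f`.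
-/

open scoped Pointwise in
theorem range_inv_smul_natCast {ι : Type*} [Fintype ι] (t : ℕ) [NeZero t] :
    Set.range (fun a : ι → ℕ => (t : ℝ)⁻¹ • fun i => (a i : ℝ)) =
      (t : ℝ)⁻¹ • (Submodule.span ℤ (Set.range (Pi.basisFun ℝ ι)) : Set (ι → ℝ)) ∩
        {x | ∀ i, 0 ≤ x i} := by
  have ht : (t : ℝ) ≠ 0 := NeZero.ne _
  ext x
  rw [← Submodule.coe_pointwise_smul]
  simp only [Set.mem_range, Set.mem_inter_iff, SetLike.mem_coe,
    BoxIntegral.unitPartition.mem_smul_span_iff, Set.mem_ofPred_eq, eq_intCast]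
  constructor
  · rintro ⟨a, rfl⟩
    refine ⟨fun i => ⟨a i, ?_⟩, fun i => by simp only [Pi.smul_apply, smul_eq_mul]; positivity⟩
    simp [mul_inv_cancel_left₀ ht]
  · rintro ⟨hL, hx⟩
    choose z hz using hL
    refine ⟨fun i => (z i).toNat, funext fun i => ?_⟩
    have hz0 : 0 ≤ z i := by exact_mod_cast (hz i).symm ▸ mul_nonneg t.cast_nonneg (hx i)
    have hcast : ((z i).toNat : ℝ) = z i := by exact_mod_cast Int.toNat_of_nonneg hz0
    simp only [Pi.smul_apply, smul_eq_mul, hcast, hz i, inv_mul_cancel_left₀ ht]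

open scoped Pointwise in
theorem tendsto_tsum_natLattice_div_pow_atTop_integral {ι : Type*} [Fintype ι]
    {s : Set (ι → ℝ)} {F : (ι → ℝ) → ℝ} (hF : Continuous F) (hs_nonneg : ∀ x ∈ s, ∀ i, 0 ≤ x i)
    (hs_bdd : Bornology.IsBounded s) (hs_meas : MeasurableSet s)
    (hs_frontier : volume (frontier s) = 0) :
    Tendsto (fun t : ℕ =>
        (∑' a : {a : ι → ℕ // (t : ℝ)⁻¹ • (fun i => (a i : ℝ)) ∈ s},
          F ((t : ℝ)⁻¹ • fun i => (a.1 i : ℝ))) / (t : ℝ) ^ Fintype.card ι)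
      atTop (𝓝 (∫ x in s, F x)) := by
  refine (tendsto_tsum_div_pow_atTop_integral s F hF hs_bdd hs_meas hs_frontier).congr' ?_
  filter_upwards [eventually_ge_atTop 1] with t ht
  have : NeZero t := ⟨by omega⟩
  set g : (ι → ℕ) → ι → ℝ := fun a => (t : ℝ)⁻¹ • fun i => (a i : ℝ)
  have hg : Function.Injective g := fun a b hab => funext fun i => by
    simpa [g, NeZero.ne] using congrFun hab i
  have hs : s ∩ (t : ℝ)⁻¹ • (Submodule.span ℤ (Set.range (Pi.basisFun ℝ ι)) : Set (ι → ℝ)) =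
      g '' (g ⁻¹' s) := by
    rw [Set.image_preimage_eq_inter_range, range_inv_smul_natCast, ← Set.inter_assoc]
    exact (Set.inter_eq_left.2 fun x hx => hs_nonneg x hx.1).symm
  rw [hs, tsum_image F hg.injOn]
  rfl

/-- The paper's `R₁` is `triangularRegion hn c C 1`, and `Ω_t` is the set of lattice points of
`triangularRegion hn c C t`. -/
def triangularRegion {n : ℕ} (hn : 1 ≤ n) (c : Fin n → ℝ) (C : Fin n → Fin n → ℝ) (s : ℝ) :
    Set (Fin n → ℝ) :=
  {x | (0 ≤ x ⟨0, hn⟩ ∧ x ⟨0, hn⟩ ≤ s) ∧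
    ∀ k : Fin n, k ≠ ⟨0, hn⟩ →
      0 ≤ x k ∧ x k ≤ c k * s + ∑ l with l < k, C k l * x l}

section triangularRegion

variable {n : ℕ} {hn : 1 ≤ n} {c : Fin n → ℝ} {C : Fin n → Fin n → ℝ} {s : ℝ} {x : Fin n → ℝ}

theorem nonneg_of_mem_triangularRegion (hx : x ∈ triangularRegion hn c C s) (k : Fin n) :
    0 ≤ x k := by
  obtain rfl | hk := eq_or_ne k ⟨0, hn⟩
  exacts [hx.1.1, (hx.2 k hk).1]

theorem apply_le_pow_of_mem_triangularRegion {B : ℝ} (hsB : s ≤ B)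
    (hB : ∀ k, |c k * s| + ∑ l, |C k l| ≤ B - 1) (hx : x ∈ triangularRegion hn c C s) (k : Fin n) :
    x k ≤ B ^ ((k : ℕ) + 1) := by
  have hB1 : 1 ≤ B := by
    have : 0 ≤ ∑ l, |C k l| := by positivity
    linarith [hB k, abs_nonneg (c k * s)]
  induction k using WellFoundedLT.induction with | _ k ih => ?_
  obtain rfl | hk := eq_or_ne k ⟨0, hn⟩
  · simpa using hx.1.2.trans hsB
  have hsum : ∑ l with l < k, C k l * x l ≤ (∑ l, |C k l|) * B ^ (k : ℕ) := by
    rw [sum_mul]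
    refine (sum_le_sum fun l hl => ?_).trans
      (sum_le_sum_of_subset_of_nonneg (filter_subset _ _) fun l _ _ => by positivity)
    have hlk : l < k := (mem_filter.1 hl).2
    calc C k l * x l ≤ |C k l| * x l :=
          mul_le_mul_of_nonneg_right (le_abs_self _) (nonneg_of_mem_triangularRegion hx l)
      _ ≤ |C k l| * B ^ (k : ℕ) := mul_le_mul_of_nonneg_left
          ((ih l hlk).trans (pow_le_pow_right₀ hB1 hlk)) (abs_nonneg _)
  have hck : c k * s ≤ |c k * s| * B ^ (k : ℕ) :=
    (le_abs_self _).trans (le_mul_of_one_le_right (abs_nonneg _) (one_le_pow₀ hB1))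
  calc x k ≤ c k * s + ∑ l with l < k, C k l * x l := (hx.2 k hk).2
    _ ≤ (|c k * s| + ∑ l, |C k l|) * B ^ (k : ℕ) := by linarith
    _ ≤ (B - 1) * B ^ (k : ℕ) := by gcongr; exact hB k
    _ ≤ B ^ ((k : ℕ) + 1) := by
      rw [pow_succ]; nlinarith [pow_nonneg (zero_le_one.trans hB1) (k : ℕ)]

theorem isBounded_triangularRegion : Bornology.IsBounded (triangularRegion hn c C s) := by
  set B := 1 + |s| + ∑ k, (|c k * s| + ∑ l, |C k l|)
  have hsB : s ≤ B := by
    have : 0 ≤ ∑ k, (|c k * s| + ∑ l, |C k l|) := by positivity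
    linarith [le_abs_self s]
  have hB : ∀ k, |c k * s| + ∑ l, |C k l| ≤ B - 1 := fun k => by
    have := single_le_sum (f := fun k => |c k * s| + ∑ l, |C k l|) (fun k _ => by positivity)
      (mem_univ k)
    linarith [abs_nonneg s]
  exact (Metric.isBounded_Icc 0 fun k : Fin n => B ^ ((k : ℕ) + 1)).subset
    fun x hx => ⟨nonneg_of_mem_triangularRegion hx, apply_le_pow_of_mem_triangularRegion hsB hB hx⟩

theorem isClosed_triangularRegion : IsClosed (triangularRegion hn c C s) := by
  simp only [triangularRegion, Set.ofPred_and, Set.ofPred_forall]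
  exact ((isClosed_le (by fun_prop) (by fun_prop)).inter
      (isClosed_le (by fun_prop) (by fun_prop))).inter
    (isClosed_iInter fun k => isClosed_iInter fun _ =>
      (isClosed_le (by fun_prop) (by fun_prop)).inter (isClosed_le (by fun_prop) (by fun_prop)))

theorem convex_triangularRegion : Convex ℝ (triangularRegion hn c C s) := by
  intro x hx y hy a b ha hb hab
  obtain rfl : b = 1 - a := by linarith
  have hcomb {u v p q : ℝ} (hu : u ≤ p) (hv : v ≤ q) :
      a * u + (1 - a) * v ≤ a * p + (1 - a) * q :=
    add_le_add (mul_le_mul_of_nonneg_left hu ha) (mul_le_mul_of_nonneg_left hv hb)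
  have hsum (k : Fin n) : ∑ l with l < k, C k l * (a * x l + (1 - a) * y l) =
      a * ∑ l with l < k, C k l * x l + (1 - a) * ∑ l with l < k, C k l * y l := by
    rw [mul_sum, mul_sum, ← sum_add_distrib]; exact sum_congr rfl fun l _ => by ring
  have hx0 := nonneg_of_mem_triangularRegion hx
  have hy0 := nonneg_of_mem_triangularRegion hy
  simp only [triangularRegion, Set.mem_ofPred_eq, Pi.add_apply, Pi.smul_apply, smul_eq_mul, hsum]
  refine ⟨⟨by simpa using hcomb (hx0 _) (hy0 _), by linarith [hcomb hx.1.2 hy.1.2]⟩,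
    fun k hk => ⟨by simpa using hcomb (hx0 k) (hy0 k),
      by linarith [hcomb (hx.2 k hk).2 (hy.2 k hk).2]⟩⟩

theorem smul_mem_triangularRegion_iff {t : ℝ} (ht : 0 < t) :
    t • x ∈ triangularRegion hn c C (t * s) ↔ x ∈ triangularRegion hn c C s := by
  have hsum (k : Fin n) : c k * (t * s) + ∑ l with l < k, C k l * (t * x l) =
      t * (c k * s + ∑ l with l < k, C k l * x l) := by
    rw [mul_add, mul_sum, mul_left_comm]; congr 1; exact sum_congr rfl fun l _ => by ring
  simp only [triangularRegion, Set.mem_ofPred_eq, Pi.smul_apply, smul_eq_mul, hsum,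
    mul_nonneg_iff_of_pos_left ht, mul_le_mul_iff_right₀ ht]

theorem natCast_mem_triangularRegion_iff {a : Fin n → ℕ} {t : ℝ} :
    (fun j => (a j : ℝ)) ∈ triangularRegion hn c C t ↔
      (a ⟨0, hn⟩ : ℝ) ≤ t ∧
        ∀ k : Fin n, k ≠ ⟨0, hn⟩ →
          (a k : ℝ) ≤ c k * t + ∑ l with l < k, C k l * (a l : ℝ) := by
  simp [triangularRegion]

end triangularRegion

theorem prod_smul_apply_pow {ι R : Type*} [Fintype ι] [CommSemiring R] (r : R) (x : ι → R)
    (m : ι → ℕ) : ∏ i, (r • x) i ^ m i = r ^ (∑ i, m i) * ∏ i, x i ^ m i := by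
  simp only [Pi.smul_apply, smul_eq_mul, mul_pow, prod_mul_distrib, prod_pow_eq_pow_sum]

theorem lattice_sum_asymptotics_general
    (n : ℕ) (hn : 1 ≤ n) (m : Fin n → ℕ)
    (c : Fin n → ℝ) (C : Fin n → Fin n → ℝ) :
    Tendsto
      (fun t : ℕ =>
        (∑' a : {a : Fin n → ℕ //
            (a ⟨0, hn⟩ : ℝ) ≤ (t : ℝ) ∧
            ∀ k : Fin n, k ≠ ⟨0, hn⟩ →
              ((a : Fin n → ℕ) k : ℝ) ≤
                c k * (t : ℝ) +
                  ∑ l ∈ univ.filter (fun l : Fin n => l < k),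
                    C k l * ((a : Fin n → ℕ) l : ℝ)},
          ∏ j, (((a : Fin n → ℕ) j : ℝ)) ^ (m j)) /
          (t : ℝ) ^ ((∑ j, m j) + n))
      atTop
      (𝓝 (∫ x in {x : Fin n → ℝ |
          (0 ≤ x ⟨0, hn⟩ ∧ x ⟨0, hn⟩ ≤ 1) ∧
          ∀ k : Fin n, k ≠ ⟨0, hn⟩ →
            0 ≤ x k ∧
              x k ≤ c k * 1 +
                ∑ l ∈ univ.filter (fun l : Fin n => l < k), C k l * x l},
        ∏ j, (x j) ^ (m j))) := by
  have h := tendsto_tsum_natLattice_div_pow_atTop_integral (s := triangularRegion hn c C 1)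
    (F := fun x => ∏ j, x j ^ m j) (by fun_prop) (fun _ => nonneg_of_mem_triangularRegion)
    isBounded_triangularRegion isClosed_triangularRegion.measurableSet
    (convex_triangularRegion.addHaar_frontier volume)
  rw [Fintype.card_fin] at h
  refine h.congr' ?_
  filter_upwards [eventually_ge_atTop 1] with t ht
  have ht0 : (0 : ℝ) < t := by exact_mod_cast ht
  have hΩ (a : Fin n → ℕ) : (fun j => (a j : ℝ)) ∈ triangularRegion hn c C t ↔
      (t : ℝ)⁻¹ • (fun j => (a j : ℝ)) ∈ triangularRegion hn c C 1 := by
    rw [← smul_mem_triangularRegion_iff (s := 1) ht0, smul_inv_smul₀ ht0.ne', mul_one]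
  rw [← (Equiv.subtypeEquivRight fun a =>
    natCast_mem_triangularRegion_iff.symm.trans (hΩ a)).tsum_eq]
  simp only [Equiv.subtypeEquivRight_apply_coe, prod_smul_apply_pow, tsum_mul_left]
  rw [inv_pow, inv_mul_eq_div, div_div, pow_add]

/-- Lemma 4.2: a lattice sum over the regions `Ω_t` cut out by homogeneous linear
bounds `φ_k(t, x₁, …, x_{k-1}) = c_k·t + ∑_{l<k} C_{k,l}·x_l` with nonnegative
coefficients is, to leading order in `t`, the integral of the monomial over the
corresponding region `R₁` at `t = 1`. -/
theorem lattice_sum_asymptotics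
    (n : ℕ) (hn : 1 ≤ n) (m : Fin n → ℕ)
    (c : Fin n → ℝ) (C : Fin n → Fin n → ℝ)
    (hc : ∀ k : Fin n, k ≠ ⟨0, hn⟩ → 0 ≤ c k)
    (hC : ∀ k l : Fin n, l < k → 0 ≤ C k l) :
    Tendsto
      (fun t : ℕ =>
        (∑' a : {a : Fin n → ℕ //
            (a ⟨0, hn⟩ : ℝ) ≤ (t : ℝ) ∧
            ∀ k : Fin n, k ≠ ⟨0, hn⟩ →
              ((a : Fin n → ℕ) k : ℝ) ≤
                c k * (t : ℝ) +
                  ∑ l ∈ univ.filter (fun l : Fin n => l < k),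
                    C k l * ((a : Fin n → ℕ) l : ℝ)},
          ∏ j, (((a : Fin n → ℕ) j : ℝ)) ^ (m j)) /
          (t : ℝ) ^ ((∑ j, m j) + n))
      atTop
      (𝓝 (∫ x in {x : Fin n → ℝ |
          (0 ≤ x ⟨0, hn⟩ ∧ x ⟨0, hn⟩ ≤ 1) ∧
          ∀ k : Fin n, k ≠ ⟨0, hn⟩ →
            0 ≤ x k ∧
              x k ≤ c k * 1 +
                ∑ l ∈ univ.filter (fun l : Fin n => l < k), C k l * x l},
        ∏ j, (x j) ^ (m j))) :=
  lattice_sum_asymptotics_general n hn m c C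
end

section
/- Let n ≥ 1 and d ∈ ℕ, and let F : ℝⁿ → ℝ be a continuous function that is positively homogeneous of degree d, i.e. F(t·x) = t^d·F(x) for all t ≥ 0 and x ∈ ℝⁿ. Set S_{n,1} = { x ∈ ℝⁿ : x₁ ≥ x₂ ≥ ⋯ ≥ xₙ ≥ 0 and x₁ + ⋯ + xₙ ≤ 1 }, and for t ∈ ℕ set Λ_t = { a ∈ ℕⁿ : a₁ ≥ a₂ ≥ ⋯ ≥ aₙ ≥ 0 and a₁ + ⋯ + aₙ ≤ t }. Then, as t → ∞ through the natural numbers, t^{−(d+n)} · Σ_{a ∈ Λ_t} F(a) converges to the Lebesgue integral ∫_{S_{n,1}} F dx; that is, Σ_{a ∈ Λ_t} F(a) = (∫_{S_{n,1}} F dx)·t^{d+n} + lower order terms. -/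
/-!
Scaling by `t⁻¹` identifies `Λ_t` with the points of `S_{n,1} ∩ t⁻¹ ℤⁿ`, and homogeneity gives
`F a = t ^ d * F (t⁻¹ a)`. Hence `t ^ (-(d + n)) * ∑_{Λ_t} F` is the Riemann sum
`t ^ (-n) * ∑_{S_{n,1} ∩ t⁻¹ ℤⁿ} F` of `F` over `S_{n,1}` for the grid of mesh `1 / t`. These sums
converge to the integral because `S_{n,1}` is bounded and convex, so its frontier is Lebesgue-null.
-/

open Filter Topology MeasureTheory Bornology Pointwise

local notation "L" ι => Submodule.span ℤ (Set.range (Pi.basisFun ℝ ι))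

section LatticePoints

variable {ι : Type*} [Fintype ι]

theorem natCast_inv_smul_mem_smul_span (t : ℕ) [NeZero t] (a : ι → ℕ) :
    (t : ℝ)⁻¹ • (fun i => (a i : ℝ)) ∈ (t : ℝ)⁻¹ • (L ι : Set (ι → ℝ)) := by
  rw [← Submodule.coe_pointwise_smul, SetLike.mem_coe,
    BoxIntegral.unitPartition.mem_smul_span_iff]
  exact fun i => ⟨a i, by simp [mul_inv_cancel_left₀ (NeZero.ne (t : ℝ))]⟩

theorem exists_natCast_inv_smul_eq {x : ι → ℝ} (hx : ∀ i, 0 ≤ x i) (t : ℕ) [NeZero t]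
    (hxL : x ∈ (t : ℝ)⁻¹ • (L ι : Set (ι → ℝ))) :
    ∃ a : ι → ℕ, (t : ℝ)⁻¹ • (fun i => (a i : ℝ)) = x := by
  rw [← Submodule.coe_pointwise_smul, SetLike.mem_coe,
    BoxIntegral.unitPartition.mem_smul_span_iff] at hxL
  choose z hz using hxL
  have hz' : ∀ i, (z i : ℝ) = t * x i := hz
  refine ⟨fun i => (z i).toNat, funext fun i => ?_⟩
  have hz0 : 0 ≤ z i := by exact_mod_cast (hz' i).symm ▸ mul_nonneg (Nat.cast_nonneg t) (hx i)
  have ht : (t : ℝ) ≠ 0 := NeZero.ne _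
  simp only [Pi.smul_apply, smul_eq_mul]
  rw [show (((z i).toNat : ℕ) : ℝ) = (z i : ℝ) by exact_mod_cast Int.toNat_of_nonneg hz0, hz',
    inv_mul_cancel_left₀ ht]

noncomputable def natPointsEquivInterSmulSpan (s : Set (ι → ℝ)) (hs : ∀ x ∈ s, ∀ i, 0 ≤ x i)
    (t : ℕ) [NeZero t] :
    {a : ι → ℕ // (t : ℝ)⁻¹ • (fun i => (a i : ℝ)) ∈ s} ≃
      ↑(s ∩ (t : ℝ)⁻¹ • (L ι : Set (ι → ℝ))) :=
  Equiv.ofBijective (fun a => ⟨_, a.2, natCast_inv_smul_mem_smul_span t a.1⟩) <| by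
    refine ⟨fun a b hab => Subtype.ext (funext fun i => ?_), fun x => ?_⟩
    · have := congrFun (congrArg Subtype.val hab) i
      simpa [NeZero.ne (t : ℝ)] using this
    · obtain ⟨a, ha⟩ := exists_natCast_inv_smul_eq (hs x x.2.1) t x.2.2
      exact ⟨⟨a, ha ▸ x.2.1⟩, Subtype.ext ha⟩

theorem tsum_natPoints_eq_pow_mul_tsum {d : ℕ} {F : (ι → ℝ) → ℝ}
    (hF : ∀ c : ℝ, 0 ≤ c → ∀ x, F (c • x) = c ^ d * F x)
    (s : Set (ι → ℝ)) (hs : ∀ x ∈ s, ∀ i, 0 ≤ x i) (t : ℕ) [NeZero t] :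
    ∑' a : {a : ι → ℕ // (t : ℝ)⁻¹ • (fun i => (a i : ℝ)) ∈ s}, F (fun i => (a.1 i : ℝ)) =
      t ^ d * ∑' x : ↑(s ∩ (t : ℝ)⁻¹ • (L ι : Set (ι → ℝ))), F x := by
  rw [← tsum_mul_left, ← (natPointsEquivInterSmulSpan s hs t).tsum_eq]
  refine tsum_congr fun a => ?_
  rw [← hF _ (Nat.cast_nonneg t)]
  exact congrArg F (smul_inv_smul₀ (NeZero.ne (t : ℝ)) _).symm

end LatticePoints

section OrderedSimplex

variable (ι : Type*) [Fintype ι] [LE ι]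

def orderedSimplex : Set (ι → ℝ) :=
  {x | (∀ j k : ι, j ≤ k → x k ≤ x j) ∧ (∀ j, 0 ≤ x j) ∧ ∑ j, x j ≤ 1}

theorem isClosed_orderedSimplex : IsClosed (orderedSimplex ι) := by
  simp only [orderedSimplex, Set.ofPred_and, Set.ofPred_forall]
  refine .inter (isClosed_iInter fun j => isClosed_iInter fun k => isClosed_iInter fun _ =>
    isClosed_le (continuous_apply k) (continuous_apply j)) (.inter ?_ ?_)
  · exact isClosed_iInter fun j => isClosed_le continuous_const (continuous_apply j)
  · exact isClosed_le (continuous_finsetSum _ fun j _ => continuous_apply j) continuous_const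

theorem convex_orderedSimplex : Convex ℝ (orderedSimplex ι) := by
  rintro x ⟨hx_anti, hx_nonneg, hx_sum⟩ y ⟨hy_anti, hy_nonneg, hy_sum⟩ a b ha hb hab
  simp only [orderedSimplex, Set.mem_ofPred_eq, Pi.add_apply, Pi.smul_apply, smul_eq_mul,
    Finset.sum_add_distrib, ← Finset.mul_sum]
  refine ⟨fun j k hjk => ?_, fun j => ?_, ?_⟩
  · gcongr
    exacts [hx_anti j k hjk, hy_anti j k hjk]
  · exact add_nonneg (mul_nonneg ha (hx_nonneg j)) (mul_nonneg hb (hy_nonneg j))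
  · calc a * ∑ j, x j + b * ∑ j, y j ≤ a * 1 + b * 1 := by gcongr
      _ = 1 := by rw [mul_one, mul_one, hab]

theorem orderedSimplex_subset_Icc : orderedSimplex ι ⊆ Set.Icc 0 1 :=
  fun _ ⟨_, hx₀, hx₁⟩ => ⟨hx₀, fun i =>
    (Finset.single_le_sum (fun j _ => hx₀ j) (Finset.mem_univ i)).trans hx₁⟩

theorem isBounded_orderedSimplex : IsBounded (orderedSimplex ι) :=
  Metric.isBounded_Icc (0 : ι → ℝ) 1 |>.subset (orderedSimplex_subset_Icc ι)

variable {ι}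

theorem inv_smul_natCast_mem_orderedSimplex_iff {t : ℕ} (ht : t ≠ 0) (a : ι → ℕ) :
    (t : ℝ)⁻¹ • (fun i => (a i : ℝ)) ∈ orderedSimplex ι ↔
      (∀ j k : ι, j ≤ k → a k ≤ a j) ∧ ∑ j, a j ≤ t := by
  have ht' : (0 : ℝ) < t := by positivity
  simp only [orderedSimplex, Set.mem_ofPred_eq, Pi.smul_apply, smul_eq_mul, ← Finset.mul_sum,
    mul_le_mul_iff_right₀ (inv_pos.2 ht'), inv_mul_le_iff₀ ht', mul_one]
  norm_cast
  exact ⟨fun h => ⟨h.1, h.2.2⟩, fun h => ⟨h.1, fun j => by positivity, h.2⟩⟩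

end OrderedSimplex

theorem lattice_sum_homogeneous_asymptotics_general
    (n : ℕ) (d : ℕ) (F : (Fin n → ℝ) → ℝ)
    (hcont : Continuous F)
    (hhom : ∀ t : ℝ, 0 ≤ t → ∀ x : Fin n → ℝ, F (t • x) = t ^ d * F x) :
    Tendsto
      (fun t : ℕ =>
        (∑' a : {a : Fin n → ℕ //
            (∀ j k : Fin n, j ≤ k → a k ≤ a j) ∧ ∑ j, a j ≤ t},
          F (fun j => ((a : Fin n → ℕ) j : ℝ))) / (t : ℝ) ^ (d + n))
      atTop
      (𝓝 (∫ x in {x : Fin n → ℝ |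
          (∀ j k : Fin n, j ≤ k → x k ≤ x j) ∧ (∀ j, 0 ≤ x j) ∧ ∑ j, x j ≤ 1},
        F x)) := by
  have hlim := tendsto_tsum_div_pow_atTop_integral (orderedSimplex (Fin n)) F hcont
    (isBounded_orderedSimplex _) (isClosed_orderedSimplex _).measurableSet
    ((convex_orderedSimplex _).addHaar_frontier volume)
  rw [Fintype.card_fin] at hlim
  refine hlim.congr' ((eventually_ne_atTop 0).mono fun t ht => ?_)
  have : NeZero t := ⟨ht⟩
  have hsum := calc
    ∑' a : {a : Fin n → ℕ // (∀ j k : Fin n, j ≤ k → a k ≤ a j) ∧ ∑ j, a j ≤ t},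
        F (fun j => (a.1 j : ℝ))
      = ∑' a : {a : Fin n → ℕ // (t : ℝ)⁻¹ • (fun j => (a j : ℝ)) ∈ orderedSimplex (Fin n)},
          F (fun j => (a.1 j : ℝ)) :=
        (Equiv.subtypeEquivRight fun a => (inv_smul_natCast_mem_orderedSimplex_iff ht a).symm
          ).tsum_eq fun a => F (fun j => (a.1 j : ℝ))
    _ = t ^ d * ∑' x : ↑(orderedSimplex (Fin n) ∩ (t : ℝ)⁻¹ • (L (Fin n) : Set (Fin n → ℝ))),
          F x :=
        tsum_natPoints_eq_pow_mul_tsum hhom _ (fun _ hx => hx.2.1) t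
  dsimp only
  rw [hsum, pow_add, mul_div_mul_left _ _ (pow_ne_zero d (Nat.cast_ne_zero.2 ht))]

/-- Proposition 4.4: for a continuous function `F` on `ℝⁿ`, positively homogeneous of
degree `d`, the sum of `F` over the lattice points `Λ_t` (weakly decreasing tuples of
naturals with sum at most `t`) is asymptotic to `(∫_{S_{n,1}} F) · t^{d+n}`. -/
theorem lattice_sum_homogeneous_asymptotics
    (n : ℕ) (hn : 1 ≤ n) (d : ℕ) (F : (Fin n → ℝ) → ℝ)
    (hcont : Continuous F)
    (hhom : ∀ t : ℝ, 0 ≤ t → ∀ x : Fin n → ℝ, F (t • x) = t ^ d * F x) :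
    Tendsto
      (fun t : ℕ =>
        (∑' a : {a : Fin n → ℕ //
            (∀ j k : Fin n, j ≤ k → a k ≤ a j) ∧ ∑ j, a j ≤ t},
          F (fun j => ((a : Fin n → ℕ) j : ℝ))) / (t : ℝ) ^ (d + n))
      atTop
      (𝓝 (∫ x in {x : Fin n → ℝ |
          (∀ j k : Fin n, j ≤ k → x k ≤ x j) ∧ (∀ j, 0 ≤ x j) ∧ ∑ j, x j ≤ 1},
        F x)) :=
  lattice_sum_homogeneous_asymptotics_general n d F hcont hhom
end
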